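/- The operator Y with coefficients A_1(x) = q^{β-x}[x-N]_q[x+1-α]_q[x-α]_q, A_2(x) = q^{-x}[x]_q[x-N-α+β]_q[x-α]_q, A_0(x) = -(A_1(x)+A_2(x)), acting as Y f(x) = A_1(x) f(x+1) + A_0(x) f(x) + A_2(x) f(x-1), satisfies Y φ_n(x;α) = ν_n^{(1)} φ_{n+1}(x;α) + ν_n^{(2)} φ_n(x;α) + ν_n^{(3)} φ_{n-1}(x;α), with ν_n^{(1)} = -[-n]_q[n]_q[n+β-N]_q, ν_n^{(2)} = [-n]_q[n+β-N]_q[n-α]_q + q^{β-α}[n]_q[n-N-1]_q[1-n]_q, ν_n^{(3)} = -q^{β-2α}[n]_q[n-N-1]_q[1+α-n]_q. -/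

import Mathlib

open Finset

noncomputable def qnum (q y : ℝ) : ℝ := (1 - q ^ y) / (1 - q)

noncomputable def qPoch (a q : ℝ) (n : ℕ) : ℝ := ∏ j ∈ Finset.range n, (1 - a * q ^ j)

noncomputable def phi (q α : ℝ) (n : ℕ) (x : ℤ) : ℝ :=
  qPoch (q ^ (-(x : ℝ))) q n / qPoch (q ^ (α - (x : ℝ))) q n

noncomputable def A1 (q α β : ℝ) (N : ℕ) (x : ℤ) : ℝ :=
  q ^ (β - (x : ℝ)) * qnum q ((x : ℝ) - N) * qnum q ((x : ℝ) + 1 - α) * qnum q ((x : ℝ) - α)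

noncomputable def A2 (q α β : ℝ) (N : ℕ) (x : ℤ) : ℝ :=
  q ^ (-(x : ℝ)) * qnum q (x : ℝ) * qnum q ((x : ℝ) - N - α + β) * qnum q ((x : ℝ) - α)

noncomputable def A0 (q α β : ℝ) (N : ℕ) (x : ℤ) : ℝ := -(A1 q α β N x + A2 q α β N x)

/-!
Every value of `φ` in the identity is `φ_{n-1}(x)` times one or two of the factors
`(1 - q^{j-x}) / (1 - q^{α+j-x})` of its defining product, with one exception: `φ_n(x-1)` is
reached only through `[-x]_q φ_n(x-1) = [α-x]_q φ_{n+1}(x)`, which is where the factor `[x]_q` of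
`A_2` is spent. After dividing out `φ_{n-1}(x)`, the claim becomes a rational identity in
`q^x, q^α, q^β, q^N, q^n`, verified by clearing denominators.
-/

theorem qPoch_succ (a q : ℝ) (n : ℕ) : qPoch a q (n + 1) = qPoch a q n * (1 - a * q ^ n) :=
  prod_range_succ _ n

theorem qPoch_succ' (a q : ℝ) (n : ℕ) : qPoch a q (n + 1) = (1 - a) * qPoch (a * q) q n := by
  simp only [qPoch, prod_range_succ', pow_zero, mul_one, pow_succ', mul_assoc]
  exact mul_comm _ _

theorem qPoch_ne_zero_iff {a q : ℝ} {n : ℕ} : qPoch a q n ≠ 0 ↔ ∀ j < n, 1 - a * q ^ j ≠ 0 := by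
  simp [qPoch, prod_ne_zero_iff]

theorem rpow_neg_mul_qnum {q : ℝ} (hq : 0 < q) (y : ℝ) : q ^ (-y) * qnum q y = -qnum q (-y) := by
  rw [qnum, qnum, mul_div_assoc', mul_sub, mul_one, ← Real.rpow_add hq, neg_add_cancel,
    Real.rpow_zero, ← neg_div, neg_sub]

noncomputable def phiFactor (q α : ℝ) (j : ℕ) (x : ℤ) : ℝ :=
  (1 - q ^ (-(x : ℝ)) * q ^ j) / (1 - q ^ (α - (x : ℝ)) * q ^ j)

theorem phi_succ (q α : ℝ) (n : ℕ) (x : ℤ) :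
    phi q α (n + 1) x = phi q α n x * phiFactor q α n x := by
  rw [phi, phi, phiFactor, qPoch_succ, qPoch_succ, mul_div_mul_comm]

theorem phi_succ' {q : ℝ} (hq : 0 < q) (α : ℝ) (n : ℕ) (x : ℤ) :
    phi q α (n + 1) x = phiFactor q α 0 x * phi q α n (x - 1) := by
  have shift (c : ℝ) : q ^ (c - (x : ℝ)) * q = q ^ (c - ((x - 1 : ℤ) : ℝ)) := by
    rw [← Real.rpow_add_one hq.ne']
    push_cast
    ring_nf
  rw [phi, phi, phiFactor, qPoch_succ', qPoch_succ', mul_div_mul_comm, pow_zero, mul_one, mul_one,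
    ← zero_sub, shift, shift]
  simp only [zero_sub]

theorem qnum_mul_phi_sub_one {q : ℝ} (hq : 0 < q) (hq1 : q ≠ 1) (α : ℝ) (n : ℕ) (x : ℤ)
    (hx : 1 - q ^ (α - (x : ℝ)) ≠ 0) :
    qnum q (-(x : ℝ)) * phi q α n (x - 1) = qnum q (α - x) * phi q α (n + 1) x := by
  have h1q : 1 - q ≠ 0 := sub_ne_zero.2 hq1.symm
  rw [phi_succ' hq, phiFactor, qnum, qnum]
  field_simp

theorem A2_mul_phi_sub_one {q : ℝ} (hq : 0 < q) (hq1 : q ≠ 1) (α β : ℝ) (N n : ℕ) (x : ℤ)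
    (hx : 1 - q ^ (α - (x : ℝ)) ≠ 0) :
    A2 q α β N x * phi q α n (x - 1) =
      -(qnum q (α - x) * qnum q ((x : ℝ) - N - α + β) * qnum q ((x : ℝ) - α)) *
        phi q α (n + 1) x := by
  rw [A2, rpow_neg_mul_qnum hq]
  linear_combination (-(qnum q ((x : ℝ) - N - α + β) * qnum q ((x : ℝ) - α))) *
    qnum_mul_phi_sub_one hq hq1 α n x hx

/-- `Y_on_phi` for `n = k + 1`, with the common factor `φ_k(x)` divided out. -/
theorem Y_on_phi_reduced {q : ℝ} (hq : 0 < q) (hq1 : q ≠ 1) (α β : ℝ) (N k : ℕ) (x : ℤ)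
    (h0 : 1 - q ^ (α - ((x + 1 : ℤ) : ℝ)) ≠ 0)
    (hk : 1 - q ^ (α - (x : ℝ)) * q ^ k ≠ 0)
    (hk1 : 1 - q ^ (α - (x : ℝ)) * q ^ (k + 1) ≠ 0) :
    A1 q α β N x * phiFactor q α 0 (x + 1) + A0 q α β N x * phiFactor q α k x +
        -(qnum q (α - x) * qnum q ((x : ℝ) - N - α + β) * qnum q ((x : ℝ) - α)) *
          (phiFactor q α k x * phiFactor q α (k + 1) x) =
      (-(qnum q (-((k + 1 : ℕ) : ℝ)) * qnum q ((k + 1 : ℕ) : ℝ) *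
          qnum q (((k + 1 : ℕ) : ℝ) + β - N))) * (phiFactor q α k x * phiFactor q α (k + 1) x) +
        (qnum q (-((k + 1 : ℕ) : ℝ)) * qnum q (((k + 1 : ℕ) : ℝ) + β - N) *
            qnum q (((k + 1 : ℕ) : ℝ) - α) +
          q ^ (β - α) * qnum q ((k + 1 : ℕ) : ℝ) * qnum q (((k + 1 : ℕ) : ℝ) - N - 1) *
            qnum q (1 - ((k + 1 : ℕ) : ℝ))) * phiFactor q α k x +
        (-(q ^ (β - 2 * α) * qnum q ((k + 1 : ℕ) : ℝ) * qnum q (((k + 1 : ℕ) : ℝ) - N - 1) *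
          qnum q (1 + α - ((k + 1 : ℕ) : ℝ)))) := by
  have h1q : 1 - q ≠ 0 := sub_ne_zero.2 hq1.symm
  have hq0 : q ≠ 0 := hq.ne'
  have hX : q ^ x ≠ 0 := zpow_ne_zero _ hq0
  have hA : q ^ α ≠ 0 := (Real.rpow_pos_of_pos hq α).ne'
  have hK : q ^ k ≠ 0 := pow_ne_zero _ hq0
  have hG : q ^ N ≠ 0 := pow_ne_zero _ hq0
  rw [show β - 2 * α = β - α - α by ring]
  simp only [A0, A1, A2, phiFactor, qnum, Real.rpow_add hq, Real.rpow_sub hq, Real.rpow_neg hq.le,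
    Real.rpow_natCast, Real.rpow_intCast, Real.rpow_one, Int.cast_add, Int.cast_one, Nat.cast_add,
    Nat.cast_one, pow_zero, mul_one, pow_succ] at h0 hk hk1 ⊢
  generalize q ^ x = X at *
  generalize q ^ α = A at *
  generalize q ^ k = K at *
  generalize q ^ N = G at *
  generalize q ^ β = B at *
  have h0' : X * q - A ≠ 0 := fun h => h0 (by field_simp; linear_combination h)
  have hk' : X - A * K ≠ 0 := fun h => hk (by field_simp; linear_combination h)
  have hk1' : X - q * A * K ≠ 0 := fun h => hk1 (by field_simp; linear_combination h)
  field_simp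
  ring

theorem Y_on_phi_general (q α β : ℝ) (N : ℕ) (hq : 0 < q) (hq1 : q ≠ 1)
    (hgen : ∀ (x : ℤ) (k : ℕ), qPoch (q ^ (α - (x : ℝ))) q k ≠ 0)
    (n : ℕ) (hn : 1 ≤ n) (x : ℤ) :
    A1 q α β N x * phi q α n (x + 1) + A0 q α β N x * phi q α n x +
        A2 q α β N x * phi q α n (x - 1) =
      (-(qnum q (-(n : ℝ)) * qnum q (n : ℝ) * qnum q ((n : ℝ) + β - N))) * phi q α (n + 1) x +
      (qnum q (-(n : ℝ)) * qnum q ((n : ℝ) + β - N) * qnum q ((n : ℝ) - α) +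
        q ^ (β - α) * qnum q (n : ℝ) * qnum q ((n : ℝ) - N - 1) * qnum q (1 - (n : ℝ))) *
          phi q α n x +
      (-(q ^ (β - 2 * α) * qnum q (n : ℝ) * qnum q ((n : ℝ) - N - 1) *
          qnum q (1 + α - (n : ℝ)))) * phi q α (n - 1) x := by
  obtain ⟨k, rfl⟩ : ∃ k, n = k + 1 := ⟨n - 1, by omega⟩
  have hfactor (y : ℤ) (j : ℕ) : 1 - q ^ (α - (y : ℝ)) * q ^ j ≠ 0 :=
    qPoch_ne_zero_iff.1 (hgen y (j + 1)) j j.lt_succ_self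
  have h_up : phi q α (k + 1) (x + 1) = phiFactor q α 0 (x + 1) * phi q α k x := by
    rw [phi_succ' hq, add_sub_cancel_right]
  have h_down := A2_mul_phi_sub_one hq hq1 α β N (k + 1) x (by simpa using hfactor x 0)
  rw [h_up, h_down, phi_succ _ _ (k + 1), phi_succ, Nat.add_sub_cancel]
  linear_combination phi q α k x * Y_on_phi_reduced hq hq1 α β N k x
    (by simpa using hfactor (x + 1) 0) (hfactor x k) (hfactor x (k + 1))

/-- the tridiagonal action of `Y` on the basis `φ_n(x;α)`:
`Y φ_n = ν_n^{(1)} φ_{n+1} + ν_n^{(2)} φ_n + ν_n^{(3)} φ_{n-1}` (for `n ≥ 1`). -/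
theorem Y_on_phi (q α β : ℝ) (N : ℕ) (hq : 0 < q) (hq1 : q ≠ 1) (hN : 0 < N)
    (hgen : ∀ (x : ℤ) (k : ℕ), qPoch (q ^ (α - (x : ℝ))) q k ≠ 0)
    (n : ℕ) (hn : 1 ≤ n) (x : ℤ) :
    A1 q α β N x * phi q α n (x + 1) + A0 q α β N x * phi q α n x +
        A2 q α β N x * phi q α n (x - 1) =
      (-(qnum q (-(n : ℝ)) * qnum q (n : ℝ) * qnum q ((n : ℝ) + β - N))) * phi q α (n + 1) x +
      (qnum q (-(n : ℝ)) * qnum q ((n : ℝ) + β - N) * qnum q ((n : ℝ) - α) +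
        q ^ (β - α) * qnum q (n : ℝ) * qnum q ((n : ℝ) - N - 1) * qnum q (1 - (n : ℝ))) *
          phi q α n x +
      (-(q ^ (β - 2 * α) * qnum q (n : ℝ) * qnum q ((n : ℝ) - N - 1) *
          qnum q (1 + α - (n : ℝ)))) * phi q α (n - 1) x :=
  Y_on_phi_general q α β N hq hq1 hgen n hn x
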